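/- arXiv:1409.4156 — 2 statements merged into one kernel-verified Lean document; each statement's English description precedes it below -/
import Mathlib

section
/- Joins imply existence of the multiplicative pullback: Let f : S → A be an N-map and g : T → A an R-map of truncation posets, and suppose T has joins (t | t₁ and t | t₂ implies there exists t' with t₁ | t' and t₂ | t'). Then for any (s₁,t₁), (s₂,t₂) with g(t_i) | f(s_i), s_i minimal and t_i maximal, such that s₁, s₂ lie in the same connected component of S and t₁, t₂ in the same connected component of T, one has |s₁|·|t₂| = |s₂|·|t₁|. -/
namespace TP

def IsTPNorm {S : Type*} [PartialOrder S] (ν : S → ℕ) : Prop :=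
  (∀ s, 0 < ν s) ∧
  (∀ s t : S, s ≤ t → ν s ∣ ν t) ∧
  (∀ s t u : S, s ≤ t → t ≤ u → ν u / ν s = (ν u / ν t) * (ν t / ν s)) ∧
  (∀ (s : S) (d : ℕ), d ∣ ν s → ∃! t : S, t ≤ s ∧ ν t = ν s / d) ∧
  (∀ s t t' : S, s ≤ t → s ≤ t' → ν t = ν t' → t = t')

def IsTPMap {S T : Type*} [PartialOrder S] [PartialOrder T] (νS : S → ℕ) (νT : T → ℕ)
    (f : S → T) : Prop :=
  ∀ s₁ s₂ : S, s₁ ≤ s₂ → f s₁ ≤ f s₂ ∧ νT (f s₂) / νT (f s₁) = νS s₂ / νS s₁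

def IsFibration {S T : Type*} [PartialOrder S] [PartialOrder T] (f : S → T) : Prop :=
  ∀ (s : S) (t' : T), f s ≤ t' → ∃ s', s ≤ s' ∧ f s' = t'

def IsTMap {S T : Type*} [PartialOrder S] [PartialOrder T] (νS : S → ℕ) (νT : T → ℕ)
    (f : S → T) : Prop :=
  IsTPMap νS νT f ∧ IsFibration f ∧ ∀ t : T, (f ⁻¹' {t}).Finite

def SameComp {S : Type*} [PartialOrder S] (ν : S → ℕ) (a b : S) : Prop :=
  ∃ i : S, ν i = 1 ∧ i ≤ a ∧ i ≤ b

def hatPreim {S T : Type*} [PartialOrder S] [PartialOrder T] (f : S → T) (t : T) : Set S :=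
  {s | t ≤ f s ∧ ∀ s', s' ≤ s → t ≤ f s' → s' = s}

def IsNMap {S T : Type*} [PartialOrder S] [PartialOrder T] (νS : S → ℕ) (νT : T → ℕ)
    (f : S → T) : Prop :=
  IsTPMap νS νT f ∧
  (∀ (s : S) (t' : T), SameComp νT (f s) t' → ∃ s', SameComp νS s s' ∧ t' ≤ f s') ∧
  ∀ t : T, (hatPreim f t).Finite

noncomputable def ghost {S : Type*} [PartialOrder S] (ν : S → ℕ) {k : Type*} [CommRing k]
    (a : S → k) : S → k :=
  fun s => ∑ᶠ t ∈ {t : S | t ≤ s}, (ν t : k) * a t ^ (ν s / ν t)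

end TP

/-!
Each connected component of a truncation poset is a divisor-closed set of positive integers
ordered by divisibility, and on the components involved `f` and `g` become `n ↦ c * n` and
`m ↦ d * m`. Minimality of `s` forces `|s| * gcd (d * |t|) c = d * |t|`, so the claim amounts to
`gcd (d * |t₁|) c = gcd (d * |t₂|) c`. Both pairs are compared with `(s₀, t₀)`, where `t₀` is a
join of `t₁, t₂` and `s₀` is minimal over `t₀`: maximality of `t`, applied to the element of
norm `gcd |t₀| (c * |s| / d)` below `t₀`, gives `gcd (d * |t₀|) (c * |s|) = d * |t|`, whence
`gcd (d * |t₀|) c = gcd (d * |t|) c`.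
-/

theorem Nat.mul_gcd_eq_of_forall_dvd_eq {c d n : ℕ} (hc : 0 < c) (h : d ∣ c * n)
    (hmin : ∀ n', n' ∣ n → d ∣ c * n' → n' = n) : n * Nat.gcd d c = d := by
  set G := Nat.gcd d c
  have hG : 0 < G := Nat.gcd_pos_of_pos_right d hc
  have hdG : d / G * G = d := Nat.div_mul_cancel (Nat.gcd_dvd_left d c)
  have hcG : c / G * G = c := Nat.div_mul_cancel (Nat.gcd_dvd_right d c)
  have hdvd : d / G ∣ n := by
    refine (Nat.coprime_div_gcd_div_gcd hG).dvd_of_dvd_mul_left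
      (Nat.dvd_of_mul_dvd_mul_right hG ?_)
    rwa [hdG, mul_right_comm, hcG]
  have hd : d ∣ c * (d / G) := Dvd.intro_left (c / G) <| calc
    c / G * d = c / G * G * (d / G) := by nth_rw 1 [← hdG]; ring
    _ = c * (d / G) := by rw [hcG]
  rw [← hmin _ hdvd hd, hdG]

theorem Nat.gcd_mul_eq_of_forall_dvd_eq {c d m m₀ n : ℕ} (h : d * m ∣ c * n) (hm : m ∣ m₀)
    (hmax : ∀ m', m ∣ m' → m' ∣ m₀ → d * m' ∣ c * n → m' = m) :
    Nat.gcd (d * m₀) c = Nat.gcd (d * m) c := by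
  rcases d.eq_zero_or_pos with rfl | hd
  · simp
  obtain ⟨L, hL⟩ : d ∣ c * n := (dvd_mul_right d m).trans h
  have hmL : m ∣ L := Nat.dvd_of_mul_dvd_mul_left hd (hL ▸ h)
  have hgcd : Nat.gcd m₀ L = m := hmax _ (Nat.dvd_gcd hm hmL) (Nat.gcd_dvd_left m₀ L)
    (hL ▸ mul_dvd_mul_left d (Nat.gcd_dvd_right m₀ L))
  calc Nat.gcd (d * m₀) c = Nat.gcd (Nat.gcd (d * m₀) (c * n)) c := by
        rw [Nat.gcd_assoc, Nat.gcd_mul_right_left]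
    _ = Nat.gcd (d * m) c := by rw [hL, Nat.gcd_mul_left, hgcd]

theorem Nat.mul_eq_mul_of_minimal_of_maximal {c d m m₀ n n₀ : ℕ} (hc : 0 < c)
    (h : d * m ∣ c * n) (hmin : ∀ n', n' ∣ n → d * m ∣ c * n' → n' = n)
    (hmax : ∀ m', m ∣ m' → m' ∣ m₀ → d * m' ∣ c * n → m' = m) (hm : m ∣ m₀)
    (h₀ : d * m₀ ∣ c * n₀) (hmin₀ : ∀ n', n' ∣ n₀ → d * m₀ ∣ c * n' → n' = n₀) :
    n * m₀ = n₀ * m := by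
  have e := Nat.mul_gcd_eq_of_forall_dvd_eq hc h hmin
  have e₀ := Nat.mul_gcd_eq_of_forall_dvd_eq hc h₀ hmin₀
  rw [Nat.gcd_mul_eq_of_forall_dvd_eq h hm hmax] at e₀
  refine Nat.eq_of_mul_eq_mul_right (Nat.gcd_pos_of_pos_right (d * m) hc) ?_
  calc n * m₀ * Nat.gcd (d * m) c = n * Nat.gcd (d * m) c * m₀ := by ring
    _ = n₀ * Nat.gcd (d * m) c * m := by rw [e, e₀]; ring
    _ = n₀ * m * Nat.gcd (d * m) c := by ring

namespace TP

section Norm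

variable {S : Type*} [PartialOrder S] {ν : S → ℕ}

theorem IsTPNorm.exists_le_norm_eq (h : IsTPNorm ν) {x : S} {d : ℕ} (hd : d ∣ ν x) :
    ∃ y ≤ x, ν y = d := by
  obtain ⟨y, ⟨hyx, hy⟩, -⟩ := h.2.2.2.1 x (ν x / d) (Nat.div_dvd_of_dvd hd)
  exact ⟨y, hyx, hy.trans (Nat.div_div_self hd (h.1 x).ne')⟩

theorem IsTPNorm.eq_of_le_of_norm_eq (h : IsTPNorm ν) {x y z : S} (hy : y ≤ x) (hz : z ≤ x)
    (hyz : ν y = ν z) : y = z := by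
  have hyx : ν y ∣ ν x := h.2.1 y x hy
  obtain ⟨w, -, hw⟩ := h.2.2.2.1 x (ν x / ν y) (Nat.div_dvd_of_dvd hyx)
  have hdiv : ν x / (ν x / ν y) = ν y := Nat.div_div_self hyx (h.1 x).ne'
  rw [hw y ⟨hy, hdiv.symm⟩, hw z ⟨hz, by rw [hdiv, hyz]⟩]

theorem IsTPNorm.le_of_le_of_dvd (h : IsTPNorm ν) {x y z : S} (hy : y ≤ x) (hz : z ≤ x)
    (hyz : ν y ∣ ν z) : y ≤ z := by
  obtain ⟨w, hwz, hw⟩ := h.exists_le_norm_eq hyz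
  exact h.eq_of_le_of_norm_eq (hwz.trans hz) hy hw ▸ hwz

theorem IsTPNorm.le_of_le_of_norm_eq_one (h : IsTPNorm ν) {i x y : S} (hi : ν i = 1)
    (hix : i ≤ x) (hyx : y ≤ x) : i ≤ y :=
  h.le_of_le_of_dvd hix hyx (hi ▸ one_dvd (ν y))

theorem IsTPNorm.le_iff_dvd (h : IsTPNorm ν) {i y z : S} (hy : i ≤ y) (hz : i ≤ z) :
    y ≤ z ↔ ν y ∣ ν z := by
  refine ⟨h.2.1 y z, fun hyz ↦ ?_⟩
  obtain ⟨w, hwz, hw⟩ := h.exists_le_norm_eq hyz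
  have hiw : i ≤ w := h.le_of_le_of_dvd hz hwz (hw ▸ h.2.1 i y hy)
  exact h.2.2.2.2 i w y hiw hy hw ▸ hwz

theorem IsTPNorm.strictMono (h : IsTPNorm ν) : StrictMono ν := fun x y hxy ↦
  (Nat.le_of_dvd (h.1 y) (h.2.1 x y hxy.le)).lt_of_ne
    fun hν ↦ hxy.ne (h.eq_of_le_of_norm_eq hxy.le le_rfl hν)

theorem IsTPNorm.exists_minimal_le (h : IsTPNorm ν) {P : S → Prop} {x : S} (hx : P x) :
    ∃ y ≤ x, P y ∧ ∀ z ≤ y, P z → z = y := by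
  have := h.strictMono.wellFoundedLT
  obtain ⟨y, hyx, hy⟩ := exists_minimal_le_of_wellFoundedLT P x hx
  exact ⟨y, hyx, hy.1, fun z hzy hz ↦ (minimal_iff.1 hy).2 hz hzy |>.symm⟩

end Norm

theorem IsTPMap.norm_apply_eq_mul {S T : Type*} [PartialOrder S] [PartialOrder T]
    {νS : S → ℕ} {νT : T → ℕ} {f : S → T} (hT : IsTPNorm νT)
    (hf : IsTPMap νS νT f) {i s : S} (hi : νS i = 1) (his : i ≤ s) :
    νT (f s) = νT (f i) * νS s := by
  obtain ⟨hle, hdiv⟩ := hf i s his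
  rw [hi, Nat.div_one] at hdiv
  rw [← hdiv, Nat.mul_div_cancel' (hT.2.1 _ _ hle)]

section Pullback

variable {S T A : Type*} [PartialOrder S] [PartialOrder T] [PartialOrder A]
  {νS : S → ℕ} {νT : T → ℕ} {νA : A → ℕ} {f : S → A} {g : T → A} {i : S} {j : T}

theorem apply_le_apply_iff_dvd (hA : IsTPNorm νA) (hf : IsTPMap νS νA f) (hg : IsTPMap νT νA g)
    (hi : νS i = 1) (hj : νT j = 1) (hij : SameComp νA (f i) (g j)) {s : S} {t : T}
    (hs : i ≤ s) (ht : j ≤ t) :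
    g t ≤ f s ↔ νA (g j) * νT t ∣ νA (f i) * νS s := by
  obtain ⟨ε, -, hεf, hεg⟩ := hij
  rw [hA.le_iff_dvd (hεg.trans (hg j t ht).1) (hεf.trans (hf i s hs).1),
    hf.norm_apply_eq_mul hA hi hs, hg.norm_apply_eq_mul hA hj ht]

theorem forall_dvd_eq_of_minimal (hS : IsTPNorm νS) (hA : IsTPNorm νA) (hf : IsTPMap νS νA f)
    (hg : IsTPMap νT νA g) (hi : νS i = 1) (hj : νT j = 1) (hij : SameComp νA (f i) (g j))
    {s : S} {t : T} (hs : i ≤ s) (ht : j ≤ t) (hmin : ∀ s' ≤ s, g t ≤ f s' → s' = s) :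
    ∀ n, n ∣ νS s → νA (g j) * νT t ∣ νA (f i) * n → n = νS s := by
  intro n hn hdvd
  obtain ⟨s', hs's, rfl⟩ := hS.exists_le_norm_eq hn
  have his' : i ≤ s' := hS.le_of_le_of_norm_eq_one hi hs hs's
  rw [hmin s' hs's ((apply_le_apply_iff_dvd hA hf hg hi hj hij his' ht).2 hdvd)]

theorem forall_dvd_eq_of_maximal (hT : IsTPNorm νT) (hA : IsTPNorm νA) (hf : IsTPMap νS νA f)
    (hg : IsTPMap νT νA g) (hi : νS i = 1) (hj : νT j = 1) (hij : SameComp νA (f i) (g j))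
    {s : S} {t t₀ : T} (hs : i ≤ s) (ht : j ≤ t) (htt₀ : t ≤ t₀)
    (hmax : ∀ t', t ≤ t' → g t' ≤ f s → t' = t) :
    ∀ m, νT t ∣ m → m ∣ νT t₀ → νA (g j) * m ∣ νA (f i) * νS s → m = νT t := by
  intro m hm hm₀ hdvd
  obtain ⟨t', ht't₀, rfl⟩ := hT.exists_le_norm_eq hm₀
  have htt' : t ≤ t' := hT.le_of_le_of_dvd htt₀ ht't₀ hm
  rw [hmax t' htt' ((apply_le_apply_iff_dvd hA hf hg hi hj hij hs (ht.trans htt')).2 hdvd)]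

theorem norm_mul_norm_eq_of_le (hS : IsTPNorm νS) (hT : IsTPNorm νT) (hA : IsTPNorm νA)
    (hf : IsTPMap νS νA f) (hg : IsTPMap νT νA g) (hi : νS i = 1) (hj : νT j = 1)
    (hij : SameComp νA (f i) (g j)) {s s₀ : S} {t t₀ : T} (hs : i ≤ s) (hs₀ : i ≤ s₀)
    (ht : j ≤ t) (htt₀ : t ≤ t₀) (hgt : g t ≤ f s) (hmin : ∀ s' ≤ s, g t ≤ f s' → s' = s)
    (hmax : ∀ t', t ≤ t' → g t' ≤ f s → t' = t) (hgt₀ : g t₀ ≤ f s₀)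
    (hmin₀ : ∀ s' ≤ s₀, g t₀ ≤ f s' → s' = s₀) :
    νS s * νT t₀ = νS s₀ * νT t :=
  have ht₀ : j ≤ t₀ := ht.trans htt₀
  Nat.mul_eq_mul_of_minimal_of_maximal (hA.1 (f i))
    ((apply_le_apply_iff_dvd hA hf hg hi hj hij hs ht).1 hgt)
    (forall_dvd_eq_of_minimal hS hA hf hg hi hj hij hs ht hmin)
    (forall_dvd_eq_of_maximal hT hA hf hg hi hj hij hs ht htt₀ hmax) (hT.2.1 t t₀ htt₀)
    ((apply_le_apply_iff_dvd hA hf hg hi hj hij hs₀ ht₀).1 hgt₀)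
    (forall_dvd_eq_of_minimal hS hA hf hg hi hj hij hs₀ ht₀ hmin₀)

end Pullback

end TP

/-- Joins imply existence of the multiplicative pullback: if `f : S → A` is an N-map,
`g : T → A` an R-map and `T` has joins, then for pairs `(s₁,t₁)`, `(s₂,t₂)` with
`g tᵢ ≤ f sᵢ`, `sᵢ` minimal and `tᵢ` maximal, lying in the same connected components,
one has `|s₁|·|t₂| = |s₂|·|t₁|`. -/
theorem stmt15 {S T A : Type*} [PartialOrder S] [PartialOrder T] [PartialOrder A]
    (νS : S → ℕ) (νT : T → ℕ) (νA : A → ℕ)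
    (hS : TP.IsTPNorm νS) (hT : TP.IsTPNorm νT) (hA : TP.IsTPNorm νA)
    (f : S → A) (g : T → A) (hf : TP.IsNMap νS νA f) (hg : TP.IsTPMap νT νA g)
    (hjoin : ∀ t t₁ t₂ : T, t ≤ t₁ → t ≤ t₂ → ∃ t' : T, t₁ ≤ t' ∧ t₂ ≤ t') :
    ∀ (s₁ s₂ : S) (t₁ t₂ : T),
      g t₁ ≤ f s₁ → (∀ s' : S, s' ≤ s₁ → g t₁ ≤ f s' → s' = s₁) →
      (∀ t' : T, t₁ ≤ t' → g t' ≤ f s₁ → t' = t₁) →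
      g t₂ ≤ f s₂ → (∀ s' : S, s' ≤ s₂ → g t₂ ≤ f s' → s' = s₂) →
      (∀ t' : T, t₂ ≤ t' → g t' ≤ f s₂ → t' = t₂) →
      TP.SameComp νS s₁ s₂ → TP.SameComp νT t₁ t₂ →
      νS s₁ * νT t₂ = νS s₂ * νT t₁ := by
  intro s₁ s₂ t₁ t₂ hgt₁ hmin₁ hmax₁ hgt₂ hmin₂ hmax₂ ⟨i, hi, his₁, his₂⟩ ⟨j, hj, hjt₁, hjt₂⟩
  obtain ⟨t₀, ht₁t₀, ht₂t₀⟩ := hjoin j t₁ t₂ hjt₁ hjt₂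
  obtain ⟨ε, hεgt₁, hε⟩ := hA.exists_le_norm_eq (one_dvd (νA (g t₁)))
  have hij : TP.SameComp νA (f i) (g j) :=
    ⟨ε, hε, hA.le_of_le_of_norm_eq_one hε (hεgt₁.trans hgt₁) (hf.1 i s₁ his₁).1,
      hA.le_of_le_of_norm_eq_one hε hεgt₁ (hg j t₁ hjt₁).1⟩
  obtain ⟨s', ⟨i', hi', hi's₁, hi's'⟩, hgt₀s'⟩ := hf.2.1 s₁ (g t₀)
    ⟨ε, hε, hεgt₁.trans hgt₁, hεgt₁.trans (hg t₁ t₀ ht₁t₀).1⟩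
  obtain ⟨s₀, hs₀s', hgt₀, hmin₀⟩ := hS.exists_minimal_le (P := fun s ↦ g t₀ ≤ f s) hgt₀s'
  have his₀ : i ≤ s₀ := hS.le_of_le_of_norm_eq_one hi
    (hS.eq_of_le_of_norm_eq hi's₁ his₁ (hi'.trans hi.symm) ▸ hi's') hs₀s'
  have h₁ := TP.norm_mul_norm_eq_of_le hS hT hA hf.1 hg hi hj hij his₁ his₀ hjt₁ ht₁t₀
    hgt₁ hmin₁ hmax₁ hgt₀ hmin₀
  have h₂ := TP.norm_mul_norm_eq_of_le hS hT hA hf.1 hg hi hj hij his₂ his₀ hjt₂ ht₂t₀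
    hgt₂ hmin₂ hmax₂ hgt₀ hmin₀
  refine Nat.eq_of_mul_eq_mul_right (Nat.mul_pos (hS.1 s₀) (hT.1 t₀)) ?_
  calc νS s₁ * νT t₂ * (νS s₀ * νT t₀) = νS s₁ * νT t₀ * (νS s₀ * νT t₂) := by ring
    _ = νS s₂ * νT t₀ * (νS s₀ * νT t₁) := by rw [h₁, ← h₂]; ring
    _ = νS s₂ * νT t₁ * (νS s₀ * νT t₀) := by ring
end

section
/- The classical norm on ghost coordinates defines a Witt vector map: Let S ⊂ ℕ be a truncation set, n a positive integer, and ⟨n⟩S = { es : e | n, s ∈ S }. Let k be a commutative ring and for each prime p fix a ring map φ_p : k → k with φ_p(a) ≡ a^p mod p. Then for any vector ⟨x_s⟩_{s∈S} in the image of the ghost map w : W_S(k) → k^S, the vector ⟨y_t⟩_{t ∈ ⟨n⟩S} defined by y_t = x_{t/g}^{g} with g = gcd(n, t), is in the image of the ghost map w : W_{⟨n⟩S}(k) → k^{⟨n⟩S}. -/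
open Pointwise

section PrimePowers

variable {R : Type*} [CommRing R] {p : ℕ} {a b : R}

theorem pow_succ_dvd_pow_sub_pow_of_pow_dvd_sub {c : ℕ} (hc : c ≠ 0)
    (h : (p : R) ^ c ∣ a - b) :
    (p : R) ^ (c + 1) ∣ a ^ p - b ^ p := by
  rw [← geom_sum₂_mul, pow_succ']
  refine mul_dvd_mul ?_ h
  -- modulo `p` we have `a = b`, so the geometric sum becomes `p * b ^ (p - 1)`
  let f := Ideal.Quotient.mk (Ideal.span {(p : R)})
  have hf (r : R) : (p : R) ∣ r ↔ f r = 0 := by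
    rw [Ideal.Quotient.eq_zero_iff_mem, Ideal.mem_span_singleton]
  have hab : f a = f b := by
    rw [← sub_eq_zero, ← map_sub, ← hf]
    exact (dvd_pow_self _ hc).trans h
  rw [hf, RingHom.map_geom_sum₂, hab, geom_sum₂_self, ← map_natCast f, (hf _).1 dvd_rfl,
    zero_mul]

theorem pow_add_dvd_pow_sub_pow_of_pow_dvd_sub {c j N : ℕ} (hc : c ≠ 0)
    (h : (p : R) ^ c ∣ a - b) (hN : p ^ j ∣ N) : (p : R) ^ (c + j) ∣ a ^ N - b ^ N := by
  obtain ⟨r, rfl⟩ := hN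
  rw [pow_mul, pow_mul]
  refine dvd_trans ?_ (sub_dvd_pow_sub_pow _ _ r)
  induction j with
  | zero => simpa using h
  | succ j ih =>
    rw [pow_succ, pow_mul, pow_mul, ← add_assoc]
    exact pow_succ_dvd_pow_sub_pow_of_pow_dvd_sub (by omega) ih

theorem natCast_pow_dvd_natCast {e d : ℕ} (h : p ^ e ∣ d) : (p : R) ^ e ∣ (d : R) := by
  simpa using Nat.cast_dvd_cast (α := R) h

theorem Nat.cast_dvd_of_forall_pow_factorization_dvd {t : ℕ} (ht : t ≠ 0)
    (h : ∀ p, p.Prime → p ∣ t → (p : R) ^ t.factorization p ∣ a) : (t : R) ∣ a := by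
  rw [Nat.prod_primeFactors_pow_factorization ht, Nat.cast_prod]
  refine Finset.prod_dvd_of_coprime (fun p hp q hq hpq => ?_) fun p hp => ?_
  · exact_mod_cast (Nat.coprime_pow_primes _ _ (Nat.prime_of_mem_primeFactors hp)
      (Nat.prime_of_mem_primeFactors hq) hpq).cast
  · push_cast
    exact h p (Nat.prime_of_mem_primeFactors hp) (Nat.dvd_of_mem_primeFactors hp)

end PrimePowers

namespace Nat

variable {p n t : ℕ}

theorem div_ne_zero_of_dvd (ht : t ≠ 0) (hpt : p ∣ t) : t / p ≠ 0 :=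
  fun h => ht (by rw [← Nat.div_mul_cancel hpt, h, zero_mul])

theorem ordProj_dvd_of_dvd_of_not_dvd_div (hp : p.Prime) {d : ℕ} (hdt : d ∣ t)
    (hd : ¬d ∣ t / p) : p ^ t.factorization p ∣ d := by
  obtain ⟨e, rfl⟩ := hdt
  have hpe : ¬p ∣ e := fun ⟨e', he'⟩ => hd ⟨e', by
    rw [he', mul_left_comm, Nat.mul_div_cancel_left _ hp.pos]⟩
  rcases eq_or_ne d 0 with rfl | hd0
  · simp
  rw [Nat.factorization_mul hd0 (by rintro rfl; simp at hpe), Finsupp.add_apply,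
    Nat.factorization_eq_zero_of_not_dvd hpe, add_zero]
  exact Nat.ordProj_dvd d p

theorem factorization_gcd_apply (hn : n ≠ 0) (ht : t ≠ 0) (q : ℕ) :
    (n.gcd t).factorization q = min (n.factorization q) (t.factorization q) := by
  rw [Nat.factorization_gcd hn ht, Finsupp.inf_apply]

theorem factorization_div_prime_apply (hp : p.Prime) (hpt : p ∣ t) (q : ℕ) :
    (t / p).factorization q = t.factorization q - if q = p then 1 else 0 := by
  rw [Nat.factorization_div hpt, Finsupp.tsub_apply, hp.factorization, Finsupp.single_apply]
  simp only [eq_comm]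

theorem gcd_eq_mul_gcd_div_of_factorization_le (hp : p.Prime) (hn : n ≠ 0) (ht : t ≠ 0)
    (hpt : p ∣ t) (h : t.factorization p ≤ n.factorization p) :
    n.gcd t = p * n.gcd (t / p) := by
  refine Nat.eq_of_factorization_eq (Nat.gcd_ne_zero_left hn)
    (mul_ne_zero hp.ne_zero (Nat.gcd_ne_zero_left hn)) fun q => ?_
  rw [Nat.factorization_mul hp.ne_zero (Nat.gcd_ne_zero_left hn), Finsupp.add_apply,
    factorization_gcd_apply hn ht, factorization_gcd_apply hn (div_ne_zero_of_dvd ht hpt),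
    factorization_div_prime_apply hp hpt, hp.factorization, Finsupp.single_apply]
  have := hp.factorization_pos_of_dvd ht hpt
  split_ifs <;> subst_vars <;> omega

theorem gcd_div_eq_gcd_of_factorization_lt (hp : p.Prime) (hn : n ≠ 0) (ht : t ≠ 0)
    (hpt : p ∣ t) (h : n.factorization p < t.factorization p) : n.gcd (t / p) = n.gcd t := by
  refine Nat.eq_of_factorization_eq (Nat.gcd_ne_zero_left hn) (Nat.gcd_ne_zero_left hn)
    fun q => ?_
  rw [factorization_gcd_apply hn ht, factorization_gcd_apply hn (div_ne_zero_of_dvd ht hpt),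
    factorization_div_prime_apply hp hpt]
  split_ifs <;> subst_vars <;> omega

end Nat

def IsTruncationSet (S : Set ℕ) : Prop :=
  0 ∉ S ∧ ∀ ⦃s d : ℕ⦄, s ∈ S → d ∣ s → d ∈ S

namespace IsTruncationSet

variable {S : Set ℕ} {n : ℕ}

theorem divisors_mul (hS : IsTruncationSet S) (hn : n ≠ 0) :
    IsTruncationSet (n.divisors * S) := by
  refine ⟨fun h => ?_, fun t d ht hdt => ?_⟩
  · obtain ⟨e, he, u, hu, heu⟩ := Set.mem_mul.1 h
    rcases mul_eq_zero.1 heu with rfl | rfl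
    · simp at he
    · exact hS.1 hu
  · obtain ⟨e, he, u, hu, rfl⟩ := Set.mem_mul.1 ht
    obtain ⟨d₁, d₂, hd₁, hd₂, rfl⟩ := dvd_mul.1 hdt
    exact Set.mul_mem_mul (Nat.mem_divisors.2 ⟨hd₁.trans (Nat.dvd_of_mem_divisors he), hn⟩)
      (hS.2 hu hd₂)

theorem div_gcd_mem (hS : IsTruncationSet S) {t : ℕ} (ht : t ∈ (n.divisors : Set ℕ) * S) :
    t / n.gcd t ∈ S := by
  obtain ⟨e, he, u, hu, rfl⟩ := Set.mem_mul.1 ht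
  have he' : e ∣ n.gcd (e * u) := Nat.dvd_gcd (Nat.dvd_of_mem_divisors he) (dvd_mul_right e u)
  refine hS.2 hu ?_
  have := Nat.div_dvd_div_left (Nat.gcd_dvd_right n (e * u)) he'
  rwa [Nat.mul_div_cancel_left _ (Nat.pos_of_mem_divisors he)] at this

end IsTruncationSet

section Ghost

variable {k : Type*} [CommRing k]

def ghostSum (a : ℕ → k) (m : ℕ) : k :=
  ∑ d ∈ m.divisors, (d : k) * a d ^ (m / d)

theorem pow_factorization_dvd_ghostSum_sub {p : ℕ} (hp : p.Prime) {φ : k →+* k}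
    (hφ : ∀ y, (p : k) ∣ φ y - y ^ p) (a : ℕ → k) (m : ℕ) :
    (p : k) ^ m.factorization p ∣ ghostSum a m - φ (ghostSum a (m / p)) := by
  by_cases hpm : p ∣ m
  swap
  · simp [Nat.factorization_eq_zero_of_not_dvd hpm]
  obtain ⟨m, rfl⟩ := hpm
  rcases eq_or_ne m 0 with rfl | hm0
  · simp [ghostSum]
  have hsub : m.divisors ⊆ (p * m).divisors :=
    Nat.divisors_subset_of_dvd (by simp [hp.ne_zero, hm0]) (dvd_mul_left m p)
  rw [Nat.mul_div_cancel_left _ hp.pos, ghostSum, ghostSum, ← Finset.sum_sdiff hsub, map_sum,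
    add_sub_assoc, ← Finset.sum_sub_distrib]
  refine dvd_add (Finset.dvd_sum fun d hd => ?_) (Finset.dvd_sum fun d hd => ?_)
  · -- a divisor of `p * m` not dividing `m` carries the full power of `p`
    obtain ⟨hdpm, hdm⟩ := Finset.mem_sdiff.mp hd
    refine Dvd.dvd.mul_right (natCast_pow_dvd_natCast ?_) _
    refine Nat.ordProj_dvd_of_dvd_of_not_dvd_div hp (Nat.dvd_of_mem_divisors hdpm) ?_
    rw [Nat.mul_div_cancel_left _ hp.pos]
    exact fun h => hdm (Nat.mem_divisors.2 ⟨h, hm0⟩)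
  · -- for `m = d * q` the term is `d * ((a d ^ p) ^ q - φ (a d) ^ q)`
    obtain ⟨q, rfl⟩ := Nat.dvd_of_mem_divisors hd
    have hd0 : d ≠ 0 := left_ne_zero_of_mul hm0
    have hq0 : q ≠ 0 := right_ne_zero_of_mul hm0
    rw [mul_left_comm, Nat.mul_div_cancel_left _ (Nat.pos_of_ne_zero hd0),
      Nat.mul_div_cancel_left _ (Nat.pos_of_ne_zero hd0), map_mul, map_pow, map_natCast,
      ← mul_sub, pow_mul, Nat.factorization_mul hd0 (mul_ne_zero hp.ne_zero hq0),
      Finsupp.add_apply, Nat.factorization_mul hp.ne_zero hq0, Finsupp.add_apply,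
      hp.factorization_self, pow_add]
    exact mul_dvd_mul (natCast_pow_dvd_natCast (Nat.ordProj_dvd d p))
      (pow_add_dvd_pow_sub_pow_of_pow_dvd_sub one_ne_zero
        (by simpa [dvd_sub_comm] using hφ (a d)) (Nat.ordProj_dvd q p))

-- Solves `ghostSum b t = z t` for `b t` by recursion on `t`, dividing by `t` when possible
-- (and returning the junk value `0` otherwise).
open Classical in
noncomputable def ghostPreimage (z : ℕ → k) (t : ℕ) : k :=
  if h : (t : k) ∣ z t - ∑ d ∈ t.properDivisors.attach, (d : k) * ghostPreimage z d ^ (t / d)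
  then h.choose
  else 0
termination_by t
decreasing_by exact (Nat.mem_properDivisors.1 d.2).2

theorem ghostSum_ghostPreimage {z : ℕ → k} {t : ℕ} (ht : t ≠ 0)
    (h : (t : k) ∣ z t - ∑ d ∈ t.properDivisors, (d : k) * ghostPreimage z d ^ (t / d)) :
    ghostSum (ghostPreimage z) t = z t := by
  rw [ghostSum, ← Nat.cons_self_properDivisors ht, Finset.sum_cons,
    Nat.div_self (Nat.pos_of_ne_zero ht), pow_one]
  rw [← Finset.sum_attach] at h
  rw [ghostPreimage, dif_pos h, ← h.choose_spec,
    Finset.sum_attach t.properDivisors fun d => (d : k) * ghostPreimage z d ^ (t / d)]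
  ring

def IsFrobeniusLift (φ : ∀ p : ℕ, p.Prime → k →+* k) : Prop :=
  ∀ (p : ℕ) (hp : p.Prime) (y : k), (p : k) ∣ φ p hp y - y ^ p

def DworkCongr (φ : ∀ p : ℕ, p.Prime → k →+* k) (T : Set ℕ) (z : ℕ → k) : Prop :=
  ∀ t ∈ T, ∀ p (hp : p.Prime), p ∣ t →
    (p : k) ^ t.factorization p ∣ z t - φ p hp (z (t / p))

variable {φ : ∀ p : ℕ, p.Prime → k →+* k}

theorem exists_ghostSum_eq_of_dworkCongr (hφ : IsFrobeniusLift φ) {T : Set ℕ}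
    (hT : IsTruncationSet T) {z : ℕ → k} (hz : DworkCongr φ T z) :
    ∃ b : ℕ → k, ∀ t ∈ T, ghostSum b t = z t := by
  refine ⟨ghostPreimage z, fun t => ?_⟩
  induction t using Nat.strong_induction_on with
  | _ t ih =>
  intro ht
  have ht0 : t ≠ 0 := fun h => hT.1 (h ▸ ht)
  refine ghostSum_ghostPreimage ht0
    (Nat.cast_dvd_of_forall_pow_factorization_dvd ht0 fun p hp hpt => ?_)
  have hghost := pow_factorization_dvd_ghostSum_sub hp (hφ p hp) (ghostPreimage z) t
  rw [ih _ (Nat.div_lt_self (Nat.pos_of_ne_zero ht0) hp.one_lt)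
    (hT.2 ht (Nat.div_dvd_of_dvd hpt))] at hghost
  have hsplit : z t - ∑ d ∈ t.properDivisors, (d : k) * ghostPreimage z d ^ (t / d) =
      (z t - φ p hp (z (t / p))) - (ghostSum (ghostPreimage z) t - φ p hp (z (t / p))) +
        t * ghostPreimage z t := by
    rw [ghostSum, ← Nat.cons_self_properDivisors ht0, Finset.sum_cons,
      Nat.div_self (Nat.pos_of_ne_zero ht0), pow_one]
    ring
  rw [hsplit]
  exact dvd_add (dvd_sub (hz t ht p hp hpt) hghost)
    (Dvd.dvd.mul_right (natCast_pow_dvd_natCast (Nat.ordProj_dvd t p)) _)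

theorem DworkCongr.pow_gcd (hφ : IsFrobeniusLift φ) {S : Set ℕ} {x : ℕ → k}
    (hx : DworkCongr φ S x) {n : ℕ} (hn : n ≠ 0) {T : Set ℕ}
    (hT : ∀ t ∈ T, t / n.gcd t ∈ S) :
    DworkCongr φ T fun t => x (t / n.gcd t) ^ n.gcd t := by
  intro t ht p hp hpt
  rcases eq_or_ne t 0 with rfl | ht0
  · simp
  dsimp only
  have hβ := hp.factorization_pos_of_dvd ht0 hpt
  rcases le_or_gt (t.factorization p) (n.factorization p) with hle | hlt
  · have hg := Nat.gcd_eq_mul_gcd_div_of_factorization_le hp hn ht0 hpt hle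
    have hs : t / p / n.gcd (t / p) = t / n.gcd t := by rw [Nat.div_div_eq_div_mul, ← hg]
    have hj : p ^ (t.factorization p - 1) ∣ n.gcd (t / p) := by
      rw [hp.pow_dvd_iff_le_factorization (Nat.gcd_ne_zero_left hn),
        Nat.factorization_gcd_apply hn (Nat.div_ne_zero_of_dvd ht0 hpt),
        Nat.factorization_div_prime_apply hp hpt, if_pos rfl]
      omega
    have := pow_add_dvd_pow_sub_pow_of_pow_dvd_sub one_ne_zero
      (by simpa [dvd_sub_comm] using hφ p hp (x (t / n.gcd t))) hj
    rw [hs, map_pow]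
    rwa [← pow_mul, ← hg, show 1 + (t.factorization p - 1) = t.factorization p by omega] at this
  · have hg := Nat.gcd_div_eq_gcd_of_factorization_lt hp hn ht0 hpt hlt
    have hs : t / p / n.gcd t = t / n.gcd t / p := by
      rw [Nat.div_div_eq_div_mul, Nat.div_div_eq_div_mul, mul_comm]
    have hsf : (t / n.gcd t).factorization p = t.factorization p - n.factorization p := by
      rw [Nat.factorization_div (Nat.gcd_dvd_right n t), Finsupp.tsub_apply,
        Nat.factorization_gcd_apply hn ht0]
      omega
    have hps : p ∣ t / n.gcd t := Nat.dvd_of_factorization_pos (by omega)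
    have hj : p ^ n.factorization p ∣ n.gcd t := by
      rw [hp.pow_dvd_iff_le_factorization (Nat.gcd_ne_zero_left hn),
        Nat.factorization_gcd_apply hn ht0]
      omega
    have := pow_add_dvd_pow_sub_pow_of_pow_dvd_sub (by omega) (hsf ▸ hx _ (hT t ht) p hp hps) hj
    rwa [hg, hs, map_pow, ← Nat.sub_add_cancel hlt.le]

end Ghost

/-- The classical norm on ghost coordinates defines a Witt vector map: if
`⟨x_s⟩_{s ∈ S}` is in the image of the ghost map over `S`, then
`⟨y_t⟩ = ⟨x_{t/gcd(n,t)}^{gcd(n,t)}⟩` is in the image of the ghost map over `⟨n⟩S`. -/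
theorem stmt19 (S : Set ℕ) (hpos : ∀ s ∈ S, 0 < s)
    (hdvd : ∀ s ∈ S, ∀ d : ℕ, d ∣ s → 0 < d → d ∈ S)
    (n : ℕ) (hn : 0 < n) {k : Type*} [CommRing k]
    (φ : ∀ p : ℕ, p.Prime → k →+* k)
    (hφ : ∀ (p : ℕ) (hp : p.Prime) (a : k), φ p hp a - a ^ p ∈ Ideal.span {(p : k)})
    (x : ℕ → k)
    (hx : ∃ a : ℕ → k, ∀ s ∈ S, x s = ∑ d ∈ s.divisors, (d : k) * a d ^ (s / d)) :
    ∃ b : ℕ → k, ∀ t : ℕ, (∃ e u : ℕ, e ∣ n ∧ u ∈ S ∧ t = e * u) →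
      x (t / Nat.gcd n t) ^ Nat.gcd n t = ∑ d ∈ t.divisors, (d : k) * b d ^ (t / d) := by
  obtain ⟨a, ha⟩ := hx
  have hS : IsTruncationSet S := ⟨fun h => (hpos 0 h).false,
    fun s d hs hds => hdvd s hs d hds (Nat.pos_of_dvd_of_pos hds (hpos s hs))⟩
  have hφ' : IsFrobeniusLift φ := fun p hp y => Ideal.mem_span_singleton.1 (hφ p hp y)
  have hxS : DworkCongr φ S x := fun s hs p hp hps => by
    rw [ha s hs, ha _ (hS.2 hs (Nat.div_dvd_of_dvd hps))]
    exact pow_factorization_dvd_ghostSum_sub hp (hφ' p hp) a s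
  obtain ⟨b, hb⟩ := exists_ghostSum_eq_of_dworkCongr hφ' (hS.divisors_mul hn.ne')
    (hxS.pow_gcd hφ' hn.ne' fun _ => hS.div_gcd_mem)
  refine ⟨b, fun t ⟨e, u, he, hu, ht⟩ => (hb t ?_).symm⟩
  exact Set.mem_mul.2 ⟨e, Nat.mem_divisors.2 ⟨he, hn.ne'⟩, u, hu, ht.symm⟩
end
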